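/- For all integers n, x, y with 1 ≤ y ≤ x and 2 ≤ x ≤ n − 2, the count G_n(x,y) satisfies the recurrence G_n(x,y) = Σ_{i=1}^{y−1} G_{n−i−1}(x−i, y) + Σ_{j=0}^{y} G_{n−y−1}(x−y, j). -/

import Mathlib

/-- Number of 0s in a bitstring (`false` represents 0, `true` represents 1). -/
def zeros (s : List Bool) : ℕ := s.count false

/-- Length of the longest run of consecutive 0s in a bitstring
(0 if the string has no 0s). -/
def maxrun (s : List Bool) : ℕ := ((s.splitOn true).map List.length).foldr max 0


/-- A bitstring is pinned if it is nonempty and both its first and last bits are 0. -/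
def Pinned (s : List Bool) : Prop :=
  s ≠ [] ∧ s.head? = some false ∧ s.getLast? = some false


/-- A bitstring is solus if it has no two adjacent 1s. -/
def Solus (s : List Bool) : Prop := s.Chain' fun a b => ¬(a = true ∧ b = true)

/-- `G n x y` is the number of pinned solus bitstrings of length `n` with exactly
`x` 0s and longest run of 0s exactly `y`. -/
noncomputable def G (n x y : ℕ) : ℕ :=
  Nat.card {s : List Bool // s.length = n ∧ Pinned s ∧ Solus s ∧
    zeros s = x ∧ maxrun s = y}

/-!
A pinned solus string with fewer zeros than bits contains a one, so it reads uniquely as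
`0^i 1 t` with `i ≥ 1` and `t` again pinned solus (the bit after a one is a zero, and the last
bit of `t` is the last bit of the whole string). Its longest run is `max i (maxrun t)`.
Sorting by `i ≤ y`: for `i < y` the tail `t` must itself have longest run `y`, while for
`i = y` the tail may have any longest run `j ≤ y`.
-/

open Finset

def prependRun (i : ℕ) (t : List Bool) : List Bool := List.replicate i false ++ true :: t

section prependRun

variable (i : ℕ) (t : List Bool)

@[simp]
lemma prependRun_zero : prependRun 0 t = true :: t := rfl

@[simp]
lemma prependRun_succ : prependRun (i + 1) t = false :: prependRun i t := rfl

lemma length_prependRun : (prependRun i t).length = t.length + i + 1 := by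
  simp [prependRun]
  omega

lemma zeros_prependRun : zeros (prependRun i t) = zeros t + i := by
  simp [zeros, prependRun, add_comm]

lemma maxrun_prependRun : maxrun (prependRun i t) = max i (maxrun t) := by
  have hsplit : (prependRun i t).splitOn true = List.replicate i false :: t.splitOn true :=
    List.splitOnP_append_cons_of_forall_mem (by simp +contextual) true (by simp) t
  simp [maxrun, hsplit]

lemma prependRun_injective2 : Function.Injective2 prependRun := by
  intro i i' t t' h
  induction i generalizing i' with
  | zero => cases i' <;> simp_all
  | succ k ih =>
    cases i' with
    | zero => simp at h
    | succ m => simpa using ih (by simpa using h)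

variable {i t}

lemma exists_prependRun_of_true_mem {s : List Bool} (h : true ∈ s) :
    ∃ i t, s = prependRun i t := by
  induction s with
  | nil => simp at h
  | cons b s ih =>
    cases b with
    | true => exact ⟨0, s, rfl⟩
    | false =>
      obtain ⟨i, t, rfl⟩ := ih (by simpa using h)
      exact ⟨i + 1, t, rfl⟩

lemma solus_cons_false : Solus (false :: t) ↔ Solus t :=
  List.isChain_cons.trans (and_iff_right (by simp))

lemma solus_cons_true : Solus (true :: t) ↔ Solus t ∧ t.head? ≠ some true :=
  List.isChain_cons.trans (and_comm.trans (and_congr_right' (by cases t <;> simp)))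

lemma solus_prependRun_iff : Solus (prependRun i t) ↔ Solus t ∧ t.head? ≠ some true := by
  induction i with
  | zero => exact solus_cons_true
  | succ k ih => rwa [prependRun_succ, solus_cons_false]

lemma getLast?_prependRun (ht : t ≠ []) : (prependRun i t).getLast? = t.getLast? := by
  rw [prependRun, ← List.singleton_append, ← List.append_assoc,
    List.getLast?_append_of_ne_nil _ ht]

lemma pinned_and_solus_prependRun_iff :
    Pinned (prependRun i t) ∧ Solus (prependRun i t) ↔ 1 ≤ i ∧ Pinned t ∧ Solus t := by
  rw [solus_prependRun_iff]
  constructor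
  · rintro ⟨⟨-, hhead, hlast⟩, hsolus, hnot⟩
    have hi : 1 ≤ i := by
      cases i
      · simp at hhead
      · omega
    have ht : t ≠ [] := by
      rintro rfl
      simp [prependRun] at hlast
    rw [getLast?_prependRun ht] at hlast
    have hhead' : t.head? = some false := by
      cases t with
      | nil => exact absurd rfl ht
      | cons b u => cases b <;> simp_all
    exact ⟨hi, ⟨ht, hhead', hlast⟩, hsolus⟩
  · rintro ⟨hi, ⟨ht, hhead, hlast⟩, hsolus⟩
    obtain ⟨k, rfl⟩ : ∃ k, i = k + 1 := ⟨i - 1, by omega⟩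
    exact ⟨⟨by simp, rfl, by rw [getLast?_prependRun ht, hlast]⟩, hsolus, by simp [hhead]⟩

end prependRun

lemma true_mem_of_zeros_lt_length {s : List Bool} (h : zeros s < s.length) : true ∈ s := by
  by_contra hs
  exact h.ne (List.count_eq_length.mpr (by simpa using hs))

instance finite_subtype_length_eq {α : Type*} [Finite α] (m : ℕ) (P : List α → Prop) :
    Finite {s : List α // s.length = m ∧ P s} :=
  ((List.finite_length_eq α m).subset fun _ hs => hs.1).to_subtype

abbrev TailAfterRun (n x y i : ℕ) : Type :=
  {t : List Bool // t.length = n - i - 1 ∧ Pinned t ∧ Solus t ∧ zeros t = x - i ∧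
    max i (maxrun t) = y}

lemma G_eq_sum_card_tailAfterRun {n x y : ℕ} (hyx : y ≤ x) (hxn : x < n) :
    G n x y = ∑ i ∈ Icc 1 y, Nat.card (TailAfterRun n x y i) := by
  let join (p : Σ i : Icc 1 y, TailAfterRun n x y i) :
      {s : List Bool // s.length = n ∧ Pinned s ∧ Solus s ∧ zeros s = x ∧ maxrun s = y} :=
    ⟨prependRun p.1 p.2.1, by
      obtain ⟨⟨i, hi⟩, t, hlen, hpin, hsol, hzeros, hmax⟩ := p
      dsimp only at hlen hzeros hmax ⊢
      obtain ⟨hi₁, hiy⟩ := mem_Icc.mp hi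
      have hpin_sol := pinned_and_solus_prependRun_iff.mpr ⟨hi₁, hpin, hsol⟩
      refine ⟨?_, hpin_sol.1, hpin_sol.2, ?_, ?_⟩
      · rw [length_prependRun, hlen]; omega
      · rw [zeros_prependRun, hzeros]; omega
      · rwa [maxrun_prependRun]⟩
  have hjoin : Function.Bijective join := by
    constructor
    · rintro ⟨⟨i, hi⟩, t, ht⟩ ⟨⟨i', hi'⟩, t', ht'⟩ h
      have h' : prependRun i t = prependRun i' t' := congrArg Subtype.val h
      obtain ⟨rfl, rfl⟩ := prependRun_injective2 h'
      rfl
    · rintro ⟨s, hlen, hpin, hsol, hzeros, hmax⟩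
      have hone : true ∈ s := true_mem_of_zeros_lt_length (by omega)
      obtain ⟨i, t, rfl⟩ := exists_prependRun_of_true_mem hone
      obtain ⟨hi, hpin', hsol'⟩ := pinned_and_solus_prependRun_iff.mp ⟨hpin, hsol⟩
      rw [length_prependRun] at hlen
      rw [zeros_prependRun] at hzeros
      rw [maxrun_prependRun] at hmax
      refine ⟨⟨⟨i, mem_Icc.mpr ⟨hi, by omega⟩⟩, t, ?_, hpin', hsol', ?_, hmax⟩, rfl⟩ <;>
        dsimp only <;> omega
  rw [G, ← Nat.card_congr (Equiv.ofBijective join hjoin), Nat.card_sigma]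
  exact sum_coe_sort _ fun i => Nat.card (TailAfterRun n x y i)

lemma card_tailAfterRun_of_lt {n x y i : ℕ} (hiy : i < y) :
    Nat.card (TailAfterRun n x y i) = G (n - i - 1) (x - i) y :=
  Nat.card_congr <| Equiv.subtypeEquivRight fun t => by
    simp only [and_congr_right_iff]
    omega

lemma card_tailAfterRun_self (n x y : ℕ) :
    Nat.card (TailAfterRun n x y y) = ∑ j ∈ range (y + 1), G (n - y - 1) (x - y) j := by
  let split (p : Σ j : range (y + 1), {t : List Bool // t.length = n - y - 1 ∧ Pinned t ∧
      Solus t ∧ zeros t = x - y ∧ maxrun t = j}) : TailAfterRun n x y y :=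
    ⟨p.2.1, by
      obtain ⟨⟨j, hj⟩, t, hlen, hpin, hsol, hzeros, hmax⟩ := p
      dsimp only at hmax ⊢
      rw [mem_range] at hj
      exact ⟨hlen, hpin, hsol, hzeros, by omega⟩⟩
  have hsplit : Function.Bijective split := by
    constructor
    · rintro ⟨⟨j, hj⟩, t, ht⟩ ⟨⟨j', hj'⟩, t', ht'⟩ h
      obtain rfl : t = t' := congrArg Subtype.val h
      obtain rfl : j = j' := ht.2.2.2.2.symm.trans ht'.2.2.2.2
      rfl
    · rintro ⟨t, hlen, hpin, hsol, hzeros, hmax⟩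
      exact ⟨⟨⟨maxrun t, mem_range.mpr (by omega)⟩, t, hlen, hpin, hsol, hzeros, rfl⟩, rfl⟩
  rw [← Nat.card_congr (Equiv.ofBijective split hsplit), Nat.card_sigma]
  exact sum_coe_sort _ fun j => G (n - y - 1) (x - y) j

theorem G_recurrence_general (n x y : ℕ) (hy : 1 ≤ y) (hyx : y ≤ x)
    (hx : x ≤ n - 2) :
    G n x y = (∑ i ∈ Finset.Icc 1 (y - 1), G (n - i - 1) (x - i) y)
      + ∑ j ∈ Finset.range (y + 1), G (n - y - 1) (x - y) j := by
  obtain ⟨k, rfl⟩ : ∃ k, y = k + 1 := ⟨y - 1, by omega⟩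
  rw [G_eq_sum_card_tailAfterRun hyx (by omega), sum_Icc_succ_top (by omega),
    card_tailAfterRun_self, Nat.add_sub_cancel]
  congr 1
  refine sum_congr rfl fun i hi => card_tailAfterRun_of_lt ?_
  rw [mem_Icc] at hi
  omega

theorem G_recurrence (n x y : ℕ) (hy : 1 ≤ y) (hyx : y ≤ x) (hx2 : 2 ≤ x)
    (hx : x ≤ n - 2) :
    G n x y = (∑ i ∈ Finset.Icc 1 (y - 1), G (n - i - 1) (x - i) y)
      + ∑ j ∈ Finset.range (y + 1), G (n - y - 1) (x - y) j :=
  G_recurrence_general n x y hy hyx hx
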